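/- Let d ≥ 1 and let f : ℝ^d → ℝ be continuous and coercive. Define f*(x) = sup_{y ∈ ℝ^d} (⟨x,y⟩ − f(y)) and f**(y) = sup_{x ∈ ℝ^d} (⟨x,y⟩ − f*(x)) (both are finite real-valued). If f** is strictly convex at a point y ∈ ℝ^d, then f**(y) = f(y). -/

import Mathlib

/-!
Fix `x` with `y` the strict global minimum of `f** - ⟪x, ·⟫`. By coercivity `f - ⟪x, ·⟫`
attains its minimum `-f*(x)` at some `z₀`. Since `f** ≤ f` and Fenchel–Young gives
`-f*(x) ≤ f**(y) - ⟪x, y⟫`, the point `z₀` is also a global minimum of `f** - ⟪x, ·⟫`, so `z₀ = y`,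
and then `f(y) - ⟪x, y⟫ = -f*(x) ≤ f**(y) - ⟪x, y⟫`.
-/

open scoped RealInnerProductSpace
noncomputable section

/-- Legendre transform: `f*(x) = sup_y (⟨x,y⟩ − f(y))`. -/
def conj {d : ℕ} (f : EuclideanSpace ℝ (Fin d) → ℝ)
    (x : EuclideanSpace ℝ (Fin d)) : ℝ :=
  ⨆ y : EuclideanSpace ℝ (Fin d), (⟪x, y⟫ - f y)

open Filter

section Coercive

variable {E : Type*} [NormedAddCommGroup E] [InnerProductSpace ℝ E]

def Coercive (f : E → ℝ) : Prop :=
  ∀ M : ℝ, ∃ R : ℝ, ∀ z, R ≤ ‖z‖ → M ≤ f z / ‖z‖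

variable [ProperSpace E] {f : E → ℝ}

theorem Coercive.tendsto_inner_sub (hf : Coercive f) (x : E) :
    Tendsto (fun z => ⟪x, z⟫ - f z) (cocompact E) atBot := by
  obtain ⟨R, hR⟩ := hf (‖x‖ + 1)
  refine tendsto_atBot_mono' _ ?_ (tendsto_neg_atTop_atBot.comp tendsto_norm_cocompact_atTop)
  filter_upwards [tendsto_norm_cocompact_atTop.eventually_ge_atTop (max R 1)] with z hz
  have hz_pos : 0 < ‖z‖ := lt_of_lt_of_le one_pos (le_of_max_le_right hz)
  have hfz : (‖x‖ + 1) * ‖z‖ ≤ f z := (le_div_iff₀ hz_pos).mp (hR z (le_of_max_le_left hz))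
  have hinner : ⟪x, z⟫ ≤ ‖x‖ * ‖z‖ := real_inner_le_norm x z
  simp only [Function.comp_apply]
  linarith

theorem Coercive.exists_forall_inner_sub_le (hf : Coercive f) (hcont : Continuous f) (x : E) :
    ∃ z₀, ∀ z, ⟪x, z⟫ - f z ≤ ⟪x, z₀⟫ - f z₀ :=
  ((continuous_const.inner continuous_id).sub hcont).exists_forall_ge
    (hf.tendsto_inner_sub x)

end Coercive

section Conjugate

variable {d : ℕ} {f : EuclideanSpace ℝ (Fin d) → ℝ}

theorem inner_sub_le_conj {x : EuclideanSpace ℝ (Fin d)}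
    (hx : BddAbove (Set.range fun y => ⟪x, y⟫ - f y)) (y : EuclideanSpace ℝ (Fin d)) :
    ⟪x, y⟫ - f y ≤ conj f x :=
  le_ciSup hx y

theorem conj_eq_inner_sub_of_forall_le {x z₀ : EuclideanSpace ℝ (Fin d)}
    (hz₀ : ∀ z, ⟪x, z⟫ - f z ≤ ⟪x, z₀⟫ - f z₀) :
    conj f x = ⟪x, z₀⟫ - f z₀ :=
  le_antisymm (ciSup_le hz₀) (le_ciSup ⟨_, Set.forall_mem_range.mpr hz₀⟩ z₀)

variable (hf : ∀ x, BddAbove (Set.range fun y => ⟪x, y⟫ - f y))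
include hf

theorem inner_sub_conj_le (z w : EuclideanSpace ℝ (Fin d)) :
    ⟪z, w⟫ - conj f w ≤ f z := by
  have := inner_sub_le_conj (hf w) z
  rw [real_inner_comm]
  linarith

theorem conj_conj_le (z : EuclideanSpace ℝ (Fin d)) : conj (conj f) z ≤ f z :=
  ciSup_le (inner_sub_conj_le hf z)

theorem inner_sub_conj_le_conj_conj (z w : EuclideanSpace ℝ (Fin d)) :
    ⟪z, w⟫ - conj f w ≤ conj (conj f) z :=
  le_ciSup ⟨f z, Set.forall_mem_range.mpr (inner_sub_conj_le hf z)⟩ w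

end Conjugate

theorem stmt8_general (d : ℕ)
    (f : EuclideanSpace ℝ (Fin d) → ℝ)
    (hcont : Continuous f)
    (hcoer : ∀ M : ℝ, ∃ R : ℝ, ∀ z, R ≤ ‖z‖ → M ≤ f z / ‖z‖)
    (y : EuclideanSpace ℝ (Fin d))
    (hstrict : ∃ x : EuclideanSpace ℝ (Fin d),
      (∀ z, conj (conj f) z ≥ conj (conj f) y + ⟪x, z - y⟫) ∧
      (∀ z, z ≠ y → conj (conj f) y - ⟪x, y⟫ < conj (conj f) z - ⟪x, z⟫)) :
    conj (conj f) y = f y := by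
  obtain ⟨x, -, hstr⟩ := hstrict
  have hmax := Coercive.exists_forall_inner_sub_le hcoer hcont
  have hbdd : ∀ x, BddAbove (Set.range fun z => ⟪x, z⟫ - f z) := fun x =>
    (hmax x).elim fun z₀ hz₀ => ⟨_, Set.forall_mem_range.mpr hz₀⟩
  obtain ⟨z₀, hz₀⟩ := hmax x
  have hconj := conj_eq_inner_sub_of_forall_le hz₀
  have hyoung := inner_sub_conj_le_conj_conj hbdd y x
  rw [real_inner_comm] at hyoung
  obtain rfl : z₀ = y := by
    by_contra hne
    have := conj_conj_le hbdd z₀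
    linarith [hstr z₀ hne]
  exact le_antisymm (conj_conj_le hbdd z₀) (by linarith)

theorem stmt8 (d : ℕ) (hd : 1 ≤ d)
    (f : EuclideanSpace ℝ (Fin d) → ℝ)
    (hcont : Continuous f)
    (hcoer : ∀ M : ℝ, ∃ R : ℝ, ∀ z, R ≤ ‖z‖ → M ≤ f z / ‖z‖)
    (y : EuclideanSpace ℝ (Fin d))
    (hstrict : ∃ x : EuclideanSpace ℝ (Fin d),
      (∀ z, conj (conj f) z ≥ conj (conj f) y + ⟪x, z - y⟫) ∧
      (∀ z, z ≠ y → conj (conj f) y - ⟪x, y⟫ < conj (conj f) z - ⟪x, z⟫)) :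
    conj (conj f) y = f y :=
  stmt8_general d f hcont hcoer y hstrict
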